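/- arXiv:1905.12733 — 7 statements merged into one kernel-verified Lean document; each statement's English description precedes it below -/
import Mathlib

section
/- Suppose each f_i is twice continuously differentiable and, for every x in a set S ⊆ ℝ^d and every v ∈ ℝ^d, the Hessians satisfy ⟨v, ∇²f_i(x)·v⟩ ≥ μ_i·‖v‖² with μ_i > 0. Then for every x ∈ S and every v ∈ ℝ^d, the Hessian of the smooth approximation satisfies ⟨v, ∇²g_s(x)·v⟩ ≥ (min_{1≤i≤n} μ_i)·‖v‖². -/
open scoped RealInnerProductSpace
open InnerProductSpace

noncomputable def fromDual (d : ℕ) :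
    StrongDual ℝ (EuclideanSpace ℝ (Fin d)) →L[ℝ] EuclideanSpace ℝ (Fin d) :=
  LinearMap.mkContinuous
    { toFun := fun φ => (toDual ℝ (EuclideanSpace ℝ (Fin d))).symm φ
      map_add' := fun φ ψ => by simp
      map_smul' := fun c φ => by simp }
    1 (fun φ => by simp)

lemma quad_form_eq {d : ℕ} (f : EuclideanSpace ℝ (Fin d) → ℝ) (hf : ContDiff ℝ 2 f)
    (x v : EuclideanSpace ℝ (Fin d)) :
    ⟪v, fderiv ℝ (gradient f) x v⟫ =
      deriv (deriv (fun t : ℝ => f (x + t • v))) 0 := by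
  have hf1 : ContDiff ℝ 1 (fderiv ℝ f) := hf.fderiv_right (by norm_num)
  have hdiff : DifferentiableAt ℝ (fderiv ℝ f) x := hf1.differentiable (by norm_num) x
  have hc : ∀ t : ℝ, HasDerivAt (fun t : ℝ => x + t • v) v t := by
    intro t
    simpa using ((hasDerivAt_id t).smul_const v).const_add x
  have hline : ∀ t : ℝ, HasDerivAt (fun t : ℝ => f (x + t • v))
      (fderiv ℝ f (x + t • v) v) t := fun t =>
    ((hf.differentiable (by norm_num) _).hasFDerivAt).comp_hasDerivAt t (hc t)
  have h1 : HasDerivAt (fun t : ℝ => fderiv ℝ f (x + t • v))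
      (fderiv ℝ (fderiv ℝ f) x v) 0 := by
    have hx : x = x + (0:ℝ) • v := by simp
    exact HasFDerivAt.comp_hasDerivAt_of_eq (0:ℝ) hdiff.hasFDerivAt (hc 0) hx
  have hD2 : HasDerivAt (fun t : ℝ => fderiv ℝ f (x + t • v) v)
      (fderiv ℝ (fderiv ℝ f) x v v) 0 := by
    have h2 := ((ContinuousLinearMap.apply ℝ ℝ v).hasFDerivAt).comp_hasDerivAt 0 h1
    exact h2
  have hRHS : deriv (deriv (fun t : ℝ => f (x + t • v))) 0
      = fderiv ℝ (fderiv ℝ f) x v v := by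
    have : deriv (fun t : ℝ => f (x + t • v)) = fun t => fderiv ℝ f (x + t • v) v :=
      funext fun t => (hline t).deriv
    rw [this, hD2.deriv]
  have hg : HasFDerivAt (gradient f) ((fromDual d).comp (fderiv ℝ (fderiv ℝ f) x)) x :=
    ((fromDual d).hasFDerivAt).comp x hdiff.hasFDerivAt
  rw [hg.fderiv, real_inner_comm]
  show ⟪(toDual ℝ (EuclideanSpace ℝ (Fin d))).symm (fderiv ℝ (fderiv ℝ f) x v), v⟫ = _
  rw [toDual_symm_apply, hRHS]
lemma logsumexp_second_deriv_ge {n : ℕ} (hn : 0 < n) (s : ℝ) (hs : 0 < s)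
    (ψ : Fin n → ℝ → ℝ) (hψ : ∀ i, ContDiff ℝ 2 (ψ i)) (b : ℝ)
    (hb : ∀ i, b ≤ deriv (deriv (ψ i)) 0) :
    b ≤ deriv (deriv (fun t : ℝ => (1 / s) * Real.log (∑ i, Real.exp (s * ψ i t)))) 0 := by
  have hne : (Finset.univ : Finset (Fin n)).Nonempty := Finset.univ_nonempty_iff.mpr ⟨⟨0, hn⟩⟩
  have hdψ : ∀ i, Differentiable ℝ (ψ i) := fun i => (hψ i).differentiable (by norm_num)
  have hψ' : ∀ i, ContDiff ℝ 1 (deriv (ψ i)) := by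
    intro i
    have h2 : ContDiff ℝ ((1:ℕ∞) + 1) (ψ i) := by
      have : ((1:ℕ∞) + 1 : WithTop ℕ∞) = 2 := by norm_num
      rw [this]; exact hψ i
    exact (contDiff_succ_iff_deriv.mp h2).2.2
  have hdψ' : ∀ i, Differentiable ℝ (deriv (ψ i)) := fun i => (hψ' i).differentiable (by norm_num)
  set E : ℝ → ℝ := fun t => ∑ i, Real.exp (s * ψ i t) with hE_def
  have hEpos : ∀ t, 0 < E t := fun t =>
    Finset.sum_pos (fun i _ => Real.exp_pos _) hne
  have hexp : ∀ i t, HasDerivAt (fun t => Real.exp (s * ψ i t))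
      (Real.exp (s * ψ i t) * (s * deriv (ψ i) t)) t := by
    intro i t
    exact (((hdψ i t).hasDerivAt.const_mul s).exp)
  have hEder : ∀ t, HasDerivAt E (∑ i, Real.exp (s * ψ i t) * (s * deriv (ψ i) t)) t := by
    intro t
    exact HasDerivAt.fun_sum (fun i _ => hexp i t)
  set N : ℝ → ℝ := fun t => ∑ i, deriv (ψ i) t * Real.exp (s * ψ i t) with hN_def
  have hG : ∀ t, HasDerivAt (fun t : ℝ => (1 / s) * Real.log (E t)) (N t / E t) t := by
    intro t
    have h1 := ((hEder t).log (hEpos t).ne').const_mul (1 / s)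
    convert h1 using 1
    case e'_4 => rfl
    case e'_5 => rfl
    have : (∑ i, Real.exp (s * ψ i t) * (s * deriv (ψ i) t)) = s * N t := by
      rw [hN_def, Finset.mul_sum]
      exact Finset.sum_congr rfl fun i _ => by ring
    rw [this]
    field_simp
  have hderivG : deriv (fun t : ℝ => (1 / s) * Real.log (E t)) = fun t => N t / E t :=
    funext fun t => (hG t).deriv
  -- second derivative
  set p : Fin n → ℝ := fun i => deriv (ψ i) 0 with hp_def
  set q : Fin n → ℝ := fun i => deriv (deriv (ψ i)) 0 with hq_def
  set e : Fin n → ℝ := fun i => Real.exp (s * ψ i 0) with he_def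
  have hNder : HasDerivAt N (∑ i, (q i * e i + p i * (e i * (s * p i)))) 0 := by
    apply HasDerivAt.fun_sum
    intro i _
    exact ((hdψ' i 0).hasDerivAt.mul (hexp i 0))
  have hEder0 : HasDerivAt E (∑ i, e i * (s * p i)) 0 := hEder 0
  have hquot : HasDerivAt (fun t => N t / E t)
      (((∑ i, (q i * e i + p i * (e i * (s * p i)))) * E 0 - N 0 * (∑ i, e i * (s * p i))) /
        (E 0) ^ 2) 0 := hNder.div hEder0 (hEpos 0).ne'
  have hval : deriv (deriv (fun t : ℝ => (1 / s) * Real.log (E t))) 0 =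
      ((∑ i, (q i * e i + p i * (e i * (s * p i)))) * E 0 - N 0 * (∑ i, e i * (s * p i))) /
        (E 0) ^ 2 := by
    rw [hderivG, hquot.deriv]
  rw [show (fun t : ℝ => (1 / s) * Real.log (∑ i, Real.exp (s * ψ i t))) =
      (fun t : ℝ => (1 / s) * Real.log (E t)) from rfl, hval]
  -- now the algebraic inequality
  set Q : ℝ := ∑ i, q i * e i with hQ_def
  set P2 : ℝ := ∑ i, (p i) ^ 2 * e i with hP2_def
  have idN' : (∑ i, (q i * e i + p i * (e i * (s * p i)))) = Q + s * P2 := by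
    rw [hQ_def, hP2_def, Finset.mul_sum, ← Finset.sum_add_distrib]
    exact Finset.sum_congr rfl fun i _ => by ring
  have idE' : (∑ i, e i * (s * p i)) = s * N 0 := by
    rw [hN_def, Finset.mul_sum]
    exact Finset.sum_congr rfl fun i _ => by ring
  rw [idN', idE']
  have hE0 : 0 < E 0 := hEpos 0
  rw [le_div_iff₀ (by positivity)]
  -- Cauchy--Schwarz
  have CS : (N 0) ^ 2 ≤ P2 * E 0 := by
    have := Finset.sum_mul_sq_le_sq_mul_sq Finset.univ
      (fun i => p i * Real.sqrt (e i)) (fun i => Real.sqrt (e i))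
    have h1 : ∀ i : Fin n, (p i * Real.sqrt (e i)) * Real.sqrt (e i) = p i * e i := by
      intro i
      rw [mul_assoc, Real.mul_self_sqrt (Real.exp_nonneg _)]
    have h2 : ∀ i : Fin n, (p i * Real.sqrt (e i)) ^ 2 = (p i) ^ 2 * e i := by
      intro i
      rw [mul_pow, Real.sq_sqrt (Real.exp_nonneg _)]
    have h3 : ∀ i : Fin n, (Real.sqrt (e i)) ^ 2 = e i := fun i =>
      Real.sq_sqrt (Real.exp_nonneg _)
    simp only [h1, h2, h3] at this
    simpa [hN_def, hP2_def, hE_def, he_def] using this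
  have hQb : b * E 0 ≤ Q := by
    rw [hQ_def, hE_def, Finset.mul_sum]
    exact Finset.sum_le_sum fun i _ =>
      mul_le_mul_of_nonneg_right (hb i) (Real.exp_nonneg _)
  nlinarith [mul_le_mul_of_nonneg_right hQb hE0.le, mul_nonneg hs.le (sub_nonneg.mpr CS)]

/-- If each `f i` is twice continuously differentiable and has Hessian
quadratic form lower bounded by `μ i * ‖v‖²` (with `μ i > 0`) on a set `S`, then the
Hessian quadratic form of the LogSumExp approximation
`g_s x = (1/s) log (∑ i, exp (s * f i x))` is lower bounded on `S` by
`(min_i μ i) * ‖v‖²`. -/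
theorem smoothed_max_hessian_lower_bound {d n : ℕ} (hn : 0 < n) (s : ℝ) (hs : 0 < s)
    (f : Fin n → EuclideanSpace ℝ (Fin d) → ℝ)
    (hf : ∀ i, ContDiff ℝ 2 (f i))
    (S : Set (EuclideanSpace ℝ (Fin d)))
    (μ : Fin n → ℝ) (hμ : ∀ i, 0 < μ i)
    (hlow : ∀ i, ∀ x ∈ S, ∀ v : EuclideanSpace ℝ (Fin d),
      μ i * ‖v‖ ^ 2 ≤ ⟪v, fderiv ℝ (gradient (f i)) x v⟫) :
    ∀ x ∈ S, ∀ v : EuclideanSpace ℝ (Fin d),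
      (Finset.univ.inf' (Finset.univ_nonempty_iff.mpr ⟨⟨0, hn⟩⟩) μ) * ‖v‖ ^ 2 ≤
        ⟪v, fderiv ℝ
          (gradient (fun y => (1 / s) * Real.log (∑ i, Real.exp (s * f i y)))) x v⟫ := by
  intro x hx v
  have hcurve : ContDiff ℝ 2 (fun t : ℝ => x + t • v) :=
    contDiff_const.add (contDiff_id.smul contDiff_const)
  have hψ : ∀ i, ContDiff ℝ 2 (fun t : ℝ => f i (x + t • v)) := fun i =>
    (hf i).comp hcurve
  have hpos : ∀ y : EuclideanSpace ℝ (Fin d), (∑ i, Real.exp (s * f i y)) ≠ 0 := by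
    intro y
    exact (Finset.sum_pos (fun i _ => Real.exp_pos _)
      (Finset.univ_nonempty_iff.mpr ⟨⟨0, hn⟩⟩)).ne'
  have hg : ContDiff ℝ 2 (fun y => (1 / s) * Real.log (∑ i, Real.exp (s * f i y))) := by
    have hsum : ContDiff ℝ 2 (fun y => ∑ i, Real.exp (s * f i y)) :=
      ContDiff.sum fun i _ => Real.contDiff_exp.comp (contDiff_const.mul (hf i))
    exact contDiff_const.mul (hsum.log hpos)
  rw [quad_form_eq _ hg x v]
  exact logsumexp_second_deriv_ge hn s hs (fun i t => f i (x + t • v)) hψ _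
    (fun i => by
      rw [← quad_form_eq (f i) (hf i) x v]
      exact le_trans
        (mul_le_mul_of_nonneg_right (Finset.inf'_le _ (Finset.mem_univ i)) (by positivity))
        (hlow i x hx v))
end

section
/- Suppose each f_i is twice continuously differentiable and, for every x in a set S ⊆ ℝ^d and every v ∈ ℝ^d, the Hessians satisfy ⟨v, ∇²f_i(x)·v⟩ ≤ M_i·‖v‖² and the gradients satisfy ‖∇f_i(x)‖ ≤ G. Then for every x ∈ S and every v ∈ ℝ^d, the Hessian of the smooth approximation satisfies ⟨v, ∇²g_s(x)·v⟩ ≤ (s·G² + max_{1≤i≤n} M_i)·‖v‖². -/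
open scoped RealInnerProductSpace

lemma lse_hasGradientAt {d n : ℕ} (hn : 0 < n) (s : ℝ) (hs : 0 < s)
    (f : Fin n → EuclideanSpace ℝ (Fin d) → ℝ) (hf : ∀ i, ContDiff ℝ 2 (f i))
    (y : EuclideanSpace ℝ (Fin d)) :
    HasGradientAt (fun y => (1 / s) * Real.log (∑ i, Real.exp (s * f i y)))
      (∑ i, (Real.exp (s * f i y) * (∑ j, Real.exp (s * f j y))⁻¹) • gradient (f i) y) y := by
  have hFpos : 0 < ∑ j, Real.exp (s * f j y) :=
    Finset.sum_pos (fun j _ => Real.exp_pos _) ⟨⟨0, hn⟩, Finset.mem_univ _⟩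
  have hFd : ∀ (i : Fin n) (z : EuclideanSpace ℝ (Fin d)),
      HasFDerivAt (fun y => Real.exp (s * f i y))
        ((s * Real.exp (s * f i z)) • fderiv ℝ (f i) z) z := by
    intro i z
    have h1 : HasFDerivAt (f i) (fderiv ℝ (f i) z) z :=
      ((hf i).differentiable (by norm_num)).differentiableAt.hasFDerivAt
    have h2 := (h1.const_mul s).exp
    exact h2.congr_fderiv (by rw [smul_smul, mul_comm])
  have hF : HasFDerivAt (fun y => ∑ j, Real.exp (s * f j y))
      (∑ j, (s * Real.exp (s * f j y)) • fderiv ℝ (f j) y) y :=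
    HasFDerivAt.fun_sum (fun j _ => hFd j y)
  have hlog := (hF.log hFpos.ne').const_mul (1 / s)
  rw [hasGradientAt_iff_hasFDerivAt]
  refine hlog.congr_fderiv ?_
  rw [map_sum, Finset.smul_sum, Finset.smul_sum]
  refine Finset.sum_congr rfl fun i _ => ?_
  rw [LinearIsometryEquiv.map_smul, smul_smul, smul_smul]
  have hg : (InnerProductSpace.toDual ℝ (EuclideanSpace ℝ (Fin d))) (gradient (f i) y)
      = fderiv ℝ (f i) y := by
    rw [gradient, LinearIsometryEquiv.apply_symm_apply]
  rw [hg]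
  congr 1
  field_simp

lemma exp_smul_hasFDerivAt {d : ℕ} (s : ℝ) (g : EuclideanSpace ℝ (Fin d) → ℝ)
    (hg : ContDiff ℝ 2 g) (z : EuclideanSpace ℝ (Fin d)) :
    HasFDerivAt (fun y => Real.exp (s * g y)) ((s * Real.exp (s * g z)) • fderiv ℝ g z) z := by
  have h1 : HasFDerivAt g (fderiv ℝ g z) z :=
    (hg.differentiable (by norm_num)).differentiableAt.hasFDerivAt
  have h2 := (h1.const_mul s).exp
  exact h2.congr_fderiv (by rw [smul_smul, mul_comm])

lemma gradient_hasFDerivAt {d : ℕ} (g : EuclideanSpace ℝ (Fin d) → ℝ) (hg : ContDiff ℝ 2 g)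
    (z : EuclideanSpace ℝ (Fin d)) :
    HasFDerivAt (gradient g) (fderiv ℝ (gradient g) z) z := by
  have h1 : ContDiff ℝ 1 (fderiv ℝ g) := hg.fderiv_right (by norm_num)
  have h2 : ContDiff ℝ 1 (gradient g) :=
    ((InnerProductSpace.toDual ℝ (EuclideanSpace ℝ (Fin d))).symm.contDiff).comp h1
  exact (h2.differentiable (by norm_num)).differentiableAt.hasFDerivAt

set_option maxHeartbeats 2000000 in
/-- If each `f i` is twice continuously differentiable with Hessian
quadratic form upper bounded by `M i * ‖v‖²` and gradients bounded by `G` on a set `S`,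
then the Hessian quadratic form of the LogSumExp approximation
`g_s x = (1/s) log (∑ i, exp (s * f i x))` is upper bounded on `S` by
`(s * G² + max_i M i) * ‖v‖²`. -/
theorem smoothed_max_hessian_upper_bound {d n : ℕ} (hn : 0 < n) (s : ℝ) (hs : 0 < s)
    (f : Fin n → EuclideanSpace ℝ (Fin d) → ℝ)
    (hf : ∀ i, ContDiff ℝ 2 (f i))
    (S : Set (EuclideanSpace ℝ (Fin d)))
    (M : Fin n → ℝ) (G : ℝ)
    (hupp : ∀ i, ∀ x ∈ S, ∀ v : EuclideanSpace ℝ (Fin d),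
      ⟪v, fderiv ℝ (gradient (f i)) x v⟫ ≤ M i * ‖v‖ ^ 2)
    (hgrad : ∀ i, ∀ x ∈ S, ‖gradient (f i) x‖ ≤ G) :
    ∀ x ∈ S, ∀ v : EuclideanSpace ℝ (Fin d),
      ⟪v, fderiv ℝ
          (gradient (fun y => (1 / s) * Real.log (∑ i, Real.exp (s * f i y)))) x v⟫ ≤
        (s * G ^ 2 + Finset.univ.sup' (Finset.univ_nonempty_iff.mpr ⟨⟨0, hn⟩⟩) M) *
          ‖v‖ ^ 2 := by
  intro x hxS v
  have hne : (Finset.univ : Finset (Fin n)).Nonempty := ⟨⟨0, hn⟩, Finset.mem_univ _⟩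
  have hFpos : (0:ℝ) < ∑ j, Real.exp (s * f j x) :=
    Finset.sum_pos (fun j _ => Real.exp_pos _) hne
  set Fx : ℝ := ∑ j, Real.exp (s * f j x) with hFxdef
  set e : Fin n → ℝ := fun i => Real.exp (s * f i x) with hedef
  set gg : Fin n → EuclideanSpace ℝ (Fin d) := fun i => gradient (f i) x with hggdef
  set a : Fin n → ℝ := fun i => ⟪gg i, v⟫ with hadef
  set H : Fin n → (EuclideanSpace ℝ (Fin d) →L[ℝ] EuclideanSpace ℝ (Fin d)) :=
    fun i => fderiv ℝ (gradient (f i)) x with hHdef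
  -- derivative of F and of F⁻¹
  have hF : HasFDerivAt (fun y => ∑ j, Real.exp (s * f j y))
      (∑ j, (s * e j) • fderiv ℝ (f j) x) x :=
    HasFDerivAt.fun_sum (fun j _ => exp_smul_hasFDerivAt s (f j) (hf j) x)
  have hFinv : HasFDerivAt (fun y => (∑ j, Real.exp (s * f j y))⁻¹)
      ((-(Fx ^ 2)⁻¹) • (∑ j, (s * e j) • fderiv ℝ (f j) x)) x :=
    (hasDerivAt_inv hFpos.ne').comp_hasFDerivAt x hF
  -- derivative of the weights
  set w' : Fin n → (EuclideanSpace ℝ (Fin d) →L[ℝ] ℝ) := fun i =>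
    e i • ((-(Fx ^ 2)⁻¹) • (∑ j, (s * e j) • fderiv ℝ (f j) x)) +
      Fx⁻¹ • ((s * e i) • fderiv ℝ (f i) x) with hw'def
  have hw : ∀ i, HasFDerivAt
      (fun y => Real.exp (s * f i y) * (∑ j, Real.exp (s * f j y))⁻¹) (w' i) x :=
    fun i => (exp_smul_hasFDerivAt s (f i) (hf i) x).mul hFinv
  have hterm : ∀ i, HasFDerivAt
      (fun y => (Real.exp (s * f i y) * (∑ j, Real.exp (s * f j y))⁻¹) • gradient (f i) y)
      ((e i * Fx⁻¹) • H i + (w' i).smulRight (gg i)) x :=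
    fun i => (hw i).smul (gradient_hasFDerivAt (f i) (hf i) x)
  set T : EuclideanSpace ℝ (Fin d) →L[ℝ] EuclideanSpace ℝ (Fin d) :=
    ∑ i, ((e i * Fx⁻¹) • H i + (w' i).smulRight (gg i)) with hTdef
  have htot : HasFDerivAt
      (fun y => ∑ i, (Real.exp (s * f i y) * (∑ j, Real.exp (s * f j y))⁻¹) • gradient (f i) y)
      T x := HasFDerivAt.fun_sum (fun i _ => hterm i)
  have hgeq : gradient (fun y => (1 / s) * Real.log (∑ i, Real.exp (s * f i y)))
      = fun y => ∑ i, (Real.exp (s * f i y) * (∑ j, Real.exp (s * f j y))⁻¹) • gradient (f i) y :=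
    gradient_eq (fun y => lse_hasGradientAt hn s hs f hf y)
  have hfd : fderiv ℝ (gradient (fun y => (1 / s) * Real.log (∑ i, Real.exp (s * f i y)))) x
      = T := by rw [hgeq]; exact htot.fderiv
  rw [hfd]
  -- fderiv applied to v gives inner products
  have hDa : ∀ j, fderiv ℝ (f j) x v = a j := by
    intro j
    have h1 : fderiv ℝ (f j) x = (InnerProductSpace.toDual ℝ (EuclideanSpace ℝ (Fin d))) (gg j) := by
      rw [hggdef]
      simp only [gradient, LinearIsometryEquiv.apply_symm_apply]
    rw [h1, InnerProductSpace.toDual_apply_apply]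
  -- the quadratic form
  have hTv : ⟪v, T v⟫ = ∑ i, ((e i * Fx⁻¹) * ⟪v, H i v⟫ +
      (e i * (-(Fx ^ 2)⁻¹ * (∑ j, (s * e j) * a j)) + Fx⁻¹ * ((s * e i) * a i)) * a i) := by
    rw [hTdef, ContinuousLinearMap.sum_apply, inner_sum]
    refine Finset.sum_congr rfl fun i _ => ?_
    rw [ContinuousLinearMap.add_apply, ContinuousLinearMap.smul_apply,
      ContinuousLinearMap.smulRight_apply, inner_add_right, real_inner_smul_right,
      real_inner_smul_right]
    have hgv : ⟪v, gg i⟫ = a i := real_inner_comm (gg i) v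
    rw [hgv]
    congr 1
    simp only [hw'def, ContinuousLinearMap.add_apply, ContinuousLinearMap.smul_apply,
      ContinuousLinearMap.sum_apply, smul_eq_mul, hDa]
  rw [hTv]
  -- abbreviations for the scalar sums
  set B : ℝ := ∑ j, e j * a j with hBdef
  set C : ℝ := ∑ j, e j * a j ^ 2 with hCdef
  have hsum_split : ∑ i, ((e i * Fx⁻¹) * ⟪v, H i v⟫ +
      (e i * (-(Fx ^ 2)⁻¹ * (∑ j, (s * e j) * a j)) + Fx⁻¹ * ((s * e i) * a i)) * a i)
      = (∑ i, (e i * Fx⁻¹) * ⟪v, H i v⟫) + ((-(Fx ^ 2)⁻¹ * s * B) * B + (Fx⁻¹ * s) * C) := by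
    rw [Finset.sum_add_distrib]
    congr 1
    have hB' : (∑ j, (s * e j) * a j) = s * B := by
      rw [hBdef, Finset.mul_sum]; exact Finset.sum_congr rfl fun j _ => by ring
    calc ∑ i, (e i * (-(Fx ^ 2)⁻¹ * (∑ j, (s * e j) * a j)) + Fx⁻¹ * ((s * e i) * a i)) * a i
        = ∑ i, ((-(Fx ^ 2)⁻¹ * s * B) * (e i * a i) + (Fx⁻¹ * s) * (e i * a i ^ 2)) := by
          refine Finset.sum_congr rfl fun i _ => ?_; rw [hB']; ring
      _ = (-(Fx ^ 2)⁻¹ * s * B) * B + (Fx⁻¹ * s) * C := by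
          rw [Finset.sum_add_distrib, ← Finset.mul_sum, ← Finset.mul_sum, hBdef, hCdef]
  rw [hsum_split]
  -- bounds
  have hG0 : 0 ≤ G := le_trans (norm_nonneg _) (hgrad ⟨0, hn⟩ x hxS)
  have haG : ∀ i, a i ^ 2 ≤ (G * ‖v‖) ^ 2 := by
    intro i
    have h1 : |a i| ≤ G * ‖v‖ := by
      calc |a i| ≤ ‖gg i‖ * ‖v‖ := abs_real_inner_le_norm (gg i) v
        _ ≤ G * ‖v‖ := mul_le_mul_of_nonneg_right (hgrad i x hxS) (norm_nonneg v)
    calc a i ^ 2 = |a i| ^ 2 := (sq_abs _).symm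
      _ ≤ (G * ‖v‖) ^ 2 := pow_le_pow_left₀ (abs_nonneg _) h1 2
  have hC : C ≤ Fx * (G * ‖v‖) ^ 2 := by
    rw [hCdef, hFxdef]
    rw [Finset.sum_mul]
    refine Finset.sum_le_sum fun i _ => ?_
    exact mul_le_mul_of_nonneg_left (haG i) (Real.exp_pos _).le
  have hB2 : (-(Fx ^ 2)⁻¹ * s * B) * B ≤ 0 := by
    have h1 : 0 ≤ (Fx ^ 2)⁻¹ * s * B ^ 2 :=
      mul_nonneg (mul_nonneg (inv_nonneg.2 (sq_nonneg Fx)) hs.le) (sq_nonneg B)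
    nlinarith
  have hC2 : (Fx⁻¹ * s) * C ≤ s * G ^ 2 * ‖v‖ ^ 2 := by
    have h1 : (Fx⁻¹ * s) * C ≤ (Fx⁻¹ * s) * (Fx * (G * ‖v‖) ^ 2) := by
      exact mul_le_mul_of_nonneg_left hC (mul_nonneg (inv_nonneg.2 hFpos.le) hs.le)
    have hFne : Fx ≠ 0 := hFpos.ne'
    have h2 : (Fx⁻¹ * s) * (Fx * (G * ‖v‖) ^ 2) = s * G ^ 2 * ‖v‖ ^ 2 := by
      field_simp
    linarith
  set Mx : ℝ := Finset.univ.sup' (Finset.univ_nonempty_iff.mpr ⟨⟨0, hn⟩⟩) M with hMx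
  have hH1 : (∑ i, (e i * Fx⁻¹) * ⟪v, H i v⟫) ≤ Mx * ‖v‖ ^ 2 := by
    have hepos : ∀ i, (0:ℝ) < e i := fun i => Real.exp_pos _
    have hwpos : ∀ i, (0:ℝ) ≤ e i * Fx⁻¹ := fun i =>
      mul_nonneg (hepos i).le (inv_nonneg.2 hFpos.le)
    have hwsum : (∑ i, e i * Fx⁻¹) = 1 := by
      rw [← Finset.sum_mul, ← hFxdef]
      exact mul_inv_cancel₀ hFpos.ne'
    calc (∑ i, (e i * Fx⁻¹) * ⟪v, H i v⟫)
        ≤ ∑ i, (e i * Fx⁻¹) * (Mx * ‖v‖ ^ 2) := by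
          refine Finset.sum_le_sum fun i _ => ?_
          refine mul_le_mul_of_nonneg_left ?_ (hwpos i)
          refine le_trans (hupp i x hxS v) ?_
          refine mul_le_mul_of_nonneg_right ?_ (pow_nonneg (norm_nonneg v) 2)
          exact Finset.le_sup' M (Finset.mem_univ i)
      _ = Mx * ‖v‖ ^ 2 := by rw [← Finset.sum_mul, hwsum, one_mul]
  linarith
end

section
/- If each f_i : ℝ^d → ℝ is μ-strongly convex on a convex set S (i.e., x ↦ f_i(x) − (μ/2)‖x‖² is convex on S) with μ > 0, then the smooth approximation g_s is μ-strongly convex on S. -/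
open Real Finset

lemma lse_convexOn {E : Type*} [AddCommGroup E] [Module ℝ E]
    {n : ℕ} (hn : 0 < n) {S : Set E} (hS : Convex ℝ S)
    (h : Fin n → E → ℝ) (hh : ∀ i, ConvexOn ℝ S (h i)) :
    ConvexOn ℝ S (fun x => Real.log (∑ i, Real.exp (h i x))) := by
  refine ⟨hS, fun x hx y hy a b ha hb hab => ?_⟩
  have hpos : ∀ z : E, 0 < ∑ i, Real.exp (h i z) := fun z =>
    Finset.sum_pos (fun i _ => Real.exp_pos _) (Finset.univ_nonempty_iff.2 ⟨⟨0, hn⟩⟩)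
  rcases eq_or_lt_of_le ha with ha0 | ha
  · simp only [← ha0, zero_smul, zero_add, zero_mul]
    have hb1 : b = 1 := by linarith
    simp [hb1]
  rcases eq_or_lt_of_le hb with hb0 | hb
  · simp only [← hb0, zero_smul, add_zero, zero_mul]
    have ha1 : a = 1 := by linarith
    simp [ha1]
  -- step 1: pointwise convexity bound inside exp
  have step1 : ∑ i, Real.exp (h i (a • x + b • y)) ≤
      ∑ i, Real.exp (h i x) ^ a * Real.exp (h i y) ^ b := by
    refine Finset.sum_le_sum fun i _ => ?_
    rw [← Real.exp_log (Real.rpow_pos_of_pos (Real.exp_pos _) a),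
        ← Real.exp_log (Real.rpow_pos_of_pos (Real.exp_pos _) b), ← Real.exp_add,
        Real.log_rpow (Real.exp_pos _), Real.log_rpow (Real.exp_pos _),
        Real.log_exp, Real.log_exp]
    exact Real.exp_le_exp.2 ((hh i).2 hx hy ha.le hb.le hab)
  -- step 2: Hölder
  have hconj : (1/a).HolderConjugate (1/b) := by
    rw [Real.holderConjugate_iff]
    constructor
    · rw [lt_div_iff₀ ha]; linarith
    · field_simp
      exact hab
  have step2 : ∑ i, Real.exp (h i x) ^ a * Real.exp (h i y) ^ b ≤
      (∑ i, Real.exp (h i x)) ^ a * (∑ i, Real.exp (h i y)) ^ b := by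
    have := Real.inner_le_Lp_mul_Lq_of_nonneg (s := Finset.univ) hconj
      (f := fun i => Real.exp (h i x) ^ a) (g := fun i => Real.exp (h i y) ^ b)
      (fun i _ => (Real.rpow_pos_of_pos (Real.exp_pos _) a).le)
      (fun i _ => (Real.rpow_pos_of_pos (Real.exp_pos _) b).le)
    simpa [← Real.rpow_natCast, ← Real.rpow_mul (Real.exp_pos _).le,
      mul_inv_cancel₀ (ne_of_gt ha), mul_inv_cancel₀ (ne_of_gt hb)] using this
  calc Real.log (∑ i, Real.exp (h i (a • x + b • y)))
      ≤ Real.log ((∑ i, Real.exp (h i x)) ^ a * (∑ i, Real.exp (h i y)) ^ b) :=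
        Real.log_le_log (hpos _) (step1.trans step2)
    _ = a * Real.log (∑ i, Real.exp (h i x)) + b * Real.log (∑ i, Real.exp (h i y)) := by
        rw [Real.log_mul (ne_of_gt (Real.rpow_pos_of_pos (hpos x) a))
          (ne_of_gt (Real.rpow_pos_of_pos (hpos y) b)),
          Real.log_rpow (hpos x), Real.log_rpow (hpos y)]

/-- If each `f i : ℝ^d → ℝ` is `μ`-strongly convex on a convex set `S`
(i.e. `x ↦ f i x − (μ/2)‖x‖²` is convex on `S`) with `μ > 0`, then the LogSumExp
approximation `g_s x = (1/s) log (∑ i, exp (s * f i x))` is `μ`-strongly convex on `S`. -/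
theorem smoothed_max_strongly_convex {d n : ℕ} (hn : 0 < n) (s : ℝ) (hs : 0 < s)
    (f : Fin n → EuclideanSpace ℝ (Fin d) → ℝ)
    (S : Set (EuclideanSpace ℝ (Fin d))) (hS : Convex ℝ S)
    (μ : ℝ) (hμ : 0 < μ)
    (hf : ∀ i, ConvexOn ℝ S (fun x => f i x - (μ / 2) * ‖x‖ ^ 2)) :
    ConvexOn ℝ S
      (fun x => (1 / s) * Real.log (∑ i, Real.exp (s * f i x)) - (μ / 2) * ‖x‖ ^ 2) := by
  have key : ∀ x : EuclideanSpace ℝ (Fin d),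
      (1 / s) * Real.log (∑ i, Real.exp (s * f i x)) - (μ / 2) * ‖x‖ ^ 2 =
      (1 / s) * Real.log (∑ i, Real.exp (s * (f i x - (μ / 2) * ‖x‖ ^ 2))) := by
    intro x
    have : ∑ i, Real.exp (s * f i x) =
        Real.exp (s * ((μ / 2) * ‖x‖ ^ 2)) *
          ∑ i, Real.exp (s * (f i x - (μ / 2) * ‖x‖ ^ 2)) := by
      rw [Finset.mul_sum]
      refine Finset.sum_congr rfl fun i _ => ?_
      rw [← Real.exp_add]; ring_nf
    rw [this, Real.log_mul (Real.exp_ne_zero _)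
      (ne_of_gt (Finset.sum_pos (fun i _ => Real.exp_pos _)
        (Finset.univ_nonempty_iff.2 ⟨⟨0, hn⟩⟩))), Real.log_exp]
    field_simp
    ring
  simp only [key]
  have := lse_convexOn hn hS (fun i x => s * (f i x - (μ / 2) * ‖x‖ ^ 2))
    (fun i => (hf i).smul hs.le)
  simpa using this.smul (by positivity : (0:ℝ) ≤ 1 / s)
end

section
/- Let h : ℝ^d → ℝ be differentiable, μ-strongly convex on ℝ^d with μ > 0, and have L-Lipschitz gradient with L ≥ μ; let κ = L/μ; and let x* be a global minimizer of h. Define sequences (x_t), (y_t) by x_1 = y_1, x_{t+1} = y_t − (1/L)·∇h(y_t), and y_{t+1} = x_{t+1} + ((√κ − 1)/(√κ + 1))·(x_{t+1} − x_t). Then for every t ≥ 1, h(x_t) − h(x*) ≤ ( (μ/2)·‖x_1 − x*‖² + h(x_1) − h(x*) )·exp(−(t−1)/√κ). -/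
open scoped RealInnerProductSpace

variable {E : Type*} [NormedAddCommGroup E] [InnerProductSpace ℝ E] [CompleteSpace E]

lemma aux_hasDerivAt_line (h : E → ℝ) (hdiff : Differentiable ℝ h) (a v : E) (τ : ℝ) :
    HasDerivAt (fun t : ℝ => h (a + t • v)) ⟪gradient h (a + τ • v), v⟫ τ := by
  have h1 : HasFDerivAt h (InnerProductSpace.toDual ℝ E (gradient h (a + τ • v))) (a + τ • v) :=
    (hdiff (a + τ • v)).hasGradientAt.hasFDerivAt
  have h2 : HasDerivAt (fun t : ℝ => a + t • v) v τ := by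
    simpa using ((hasDerivAt_id τ).smul_const v).const_add a
  have h3 := h1.comp_hasDerivAt τ h2
  simpa [InnerProductSpace.toDual_apply_apply, Function.comp_def] using h3

lemma aux_descent (h : E → ℝ) (hdiff : Differentiable ℝ h) (L : ℝ)
    (hlip : ∀ x y : E, ‖gradient h x - gradient h y‖ ≤ L * ‖x - y‖) (a b : E) :
    h b ≤ h a + ⟪gradient h a, b - a⟫ + L / 2 * ‖b - a‖ ^ 2 := by
  set v := b - a with hv
  set φ : ℝ → ℝ := fun τ => h (a + τ • v) - ⟪gradient h a, v⟫ * τ - L / 2 * ‖v‖ ^ 2 * τ ^ 2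
    with hφ
  have hder : ∀ τ : ℝ, HasDerivAt φ
      (⟪gradient h (a + τ • v), v⟫ - ⟪gradient h a, v⟫ - L / 2 * ‖v‖ ^ 2 * (2 * τ)) τ := by
    intro τ
    have h1 := aux_hasDerivAt_line h hdiff a v τ
    have h2 : HasDerivAt (fun τ : ℝ => ⟪gradient h a, v⟫ * τ) ⟪gradient h a, v⟫ τ := by
      simpa using (hasDerivAt_id τ).const_mul ⟪gradient h a, v⟫
    have h3 : HasDerivAt (fun τ : ℝ => L / 2 * ‖v‖ ^ 2 * τ ^ 2)
        (L / 2 * ‖v‖ ^ 2 * (2 * τ)) τ := by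
      have := (hasDerivAt_pow 2 τ).const_mul (L / 2 * ‖v‖ ^ 2)
      simpa [mul_comm, mul_assoc, mul_left_comm] using this
    exact (h1.sub h2).sub h3
  have hmono : AntitoneOn φ (Set.Icc 0 1) := by
    apply antitoneOn_of_deriv_nonpos (convex_Icc 0 1)
    · exact fun τ _ => (hder τ).continuousAt.continuousWithinAt
    · intro τ _
      exact (hder τ).differentiableAt.differentiableWithinAt
    · intro τ hτ
      rw [interior_Icc] at hτ
      rw [(hder τ).deriv]
      have hb := hlip (a + τ • v) a
      have hn : ‖a + τ • v - a‖ = τ * ‖v‖ := by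
        simp [norm_smul, abs_of_pos hτ.1]
      rw [hn] at hb
      have hip : ⟪gradient h (a + τ • v) - gradient h a, v⟫
          ≤ ‖gradient h (a + τ • v) - gradient h a‖ * ‖v‖ := real_inner_le_norm _ _
      rw [inner_sub_left] at hip
      nlinarith [norm_nonneg v, norm_nonneg (gradient h (a + τ • v) - gradient h a), hτ.1]
  have h10 : φ 1 ≤ φ 0 :=
    hmono (Set.left_mem_Icc.2 zero_le_one) (Set.right_mem_Icc.2 zero_le_one) zero_le_one
  have e1 : φ 1 = h b - ⟪gradient h a, v⟫ - L / 2 * ‖v‖ ^ 2 := by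
    simp [hφ, hv]
  have e0 : φ 0 = h a := by simp [hφ]
  rw [e1, e0] at h10
  linarith

lemma aux_strong (h : E → ℝ) (hdiff : Differentiable ℝ h) (μ : ℝ)
    (hstrong : ConvexOn ℝ Set.univ (fun x => h x - μ / 2 * ‖x‖ ^ 2)) (a b : E) :
    h a + ⟪gradient h a, b - a⟫ + μ / 2 * ‖b - a‖ ^ 2 ≤ h b := by
  set v := b - a with hv
  set φ : ℝ → ℝ := fun τ =>
    h (a + τ • v) - μ / 2 * ‖a‖ ^ 2 - μ * ⟪a, v⟫ * τ - μ / 2 * ‖v‖ ^ 2 * τ ^ 2 with hφ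
  have hφc : ConvexOn ℝ Set.univ φ := by
    have hcomp := hstrong.comp_affineMap (AffineMap.lineMap a b : ℝ →ᵃ[ℝ] E)
    have heq : ((fun x => h x - μ / 2 * ‖x‖ ^ 2) ∘ (AffineMap.lineMap a b : ℝ →ᵃ[ℝ] E)) = φ := by
      funext τ
      have hl : (AffineMap.lineMap a b : ℝ →ᵃ[ℝ] E) τ = a + τ • v := by
        rw [AffineMap.lineMap_apply]
        simp [hv, add_comm]
      simp only [Function.comp_apply, hl, hφ]
      have : ‖a + τ • v‖ ^ 2 = ‖a‖ ^ 2 + 2 * (τ * ⟪a, v⟫) + τ ^ 2 * ‖v‖ ^ 2 := by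
        rw [norm_add_sq_real, real_inner_smul_right, norm_smul, Real.norm_eq_abs, mul_pow, sq_abs]
      rw [this]; ring
    rw [heq] at hcomp
    simpa using hcomp
  have hder : ∀ τ : ℝ, HasDerivAt φ
      (⟪gradient h (a + τ • v), v⟫ - μ * ⟪a, v⟫ - μ / 2 * ‖v‖ ^ 2 * (2 * τ)) τ := by
    intro τ
    have h1 := aux_hasDerivAt_line h hdiff a v τ
    have h2 : HasDerivAt (fun τ : ℝ => μ * ⟪a, v⟫ * τ) (μ * ⟪a, v⟫) τ := by
      simpa using (hasDerivAt_id τ).const_mul (μ * ⟪a, v⟫)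
    have h3 : HasDerivAt (fun τ : ℝ => μ / 2 * ‖v‖ ^ 2 * τ ^ 2) (μ / 2 * ‖v‖ ^ 2 * (2 * τ)) τ := by
      have := (hasDerivAt_pow 2 τ).const_mul (μ / 2 * ‖v‖ ^ 2)
      simpa [mul_comm, mul_assoc, mul_left_comm] using this
    have h4 : HasDerivAt (fun τ : ℝ => h (a + τ • v) - μ / 2 * ‖a‖ ^ 2)
        ⟪gradient h (a + τ • v), v⟫ τ := by
      simpa using h1.sub_const (μ / 2 * ‖a‖ ^ 2)
    exact (h4.sub h2).sub h3
  have hslope := hφc.deriv_le_slope (Set.mem_univ (0 : ℝ)) (Set.mem_univ (1 : ℝ)) zero_lt_one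
    (hder 0).differentiableAt
  rw [(hder 0).deriv, slope_def_field] at hslope
  have e1 : φ 1 = h b - μ / 2 * ‖a‖ ^ 2 - μ * ⟪a, v⟫ - μ / 2 * ‖v‖ ^ 2 := by
    simp [hφ, hv]
  have e0 : φ 0 = h a - μ / 2 * ‖a‖ ^ 2 := by simp [hφ]
  have ea : a + (0 : ℝ) • v = a := by simp
  rw [e1, e0, ea] at hslope
  have : ⟪gradient h a, v⟫ - μ * ⟪a, v⟫ - 0 ≤
      (h b - μ / 2 * ‖a‖ ^ 2 - μ * ⟪a, v⟫ - μ / 2 * ‖v‖ ^ 2 - (h a - μ / 2 * ‖a‖ ^ 2)) / 1 := by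
    simpa using hslope
  have := this
  linarith [this]

lemma aux_step (μ L s : ℝ) (hμ : 0 < μ) (hs1 : 1 ≤ s) (hLs : L = μ * s ^ 2)
    (δ' δ : ℝ) (p q g : E)
    (hA : δ' ≤ δ + ⟪g, p⟫ - μ / 2 * ‖p‖ ^ 2 - 1 / (2 * L) * ‖g‖ ^ 2)
    (hB : δ' ≤ ⟪g, q⟫ - μ / 2 * ‖q‖ ^ 2 - 1 / (2 * L) * ‖g‖ ^ 2) :
    δ' + μ / 2 * ‖q + (s - 1) • p - (s / L) • g‖ ^ 2 ≤
      (1 - 1 / s) * (δ + μ / 2 * ‖q + s • p‖ ^ 2) := by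
  have hs0 : 0 < s := lt_of_lt_of_le one_pos hs1
  have hL : 0 < L := by rw [hLs]; positivity
  have hU : ‖q + s • p‖ ^ 2 = ‖q‖ ^ 2 + 2 * s * ⟪q, p⟫ + s ^ 2 * ‖p‖ ^ 2 := by
    rw [norm_add_sq_real, real_inner_smul_right, norm_smul, Real.norm_eq_abs, mul_pow, sq_abs]
    ring
  have hV : ‖q + (s - 1) • p - (s / L) • g‖ ^ 2 =
      ‖q‖ ^ 2 + 2 * (s - 1) * ⟪q, p⟫ + (s - 1) ^ 2 * ‖p‖ ^ 2 - 2 * (s / L) * ⟪g, q⟫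
        - 2 * (s - 1) * (s / L) * ⟪g, p⟫ + (s / L) ^ 2 * ‖g‖ ^ 2 := by
    rw [show ‖q + (s - 1) • p - (s / L) • g‖ ^ 2
        = ⟪q + (s - 1) • p - (s / L) • g, q + (s - 1) • p - (s / L) • g⟫ from
      (real_inner_self_eq_norm_sq _).symm]
    simp only [inner_add_left, inner_add_right, inner_sub_left, inner_sub_right,
      real_inner_smul_left, real_inner_smul_right]
    simp only [real_inner_self_eq_norm_sq]
    rw [real_inner_comm p q, real_inner_comm q g, real_inner_comm p g]
    ring
  have hc1 : (0:ℝ) ≤ 1 - 1 / s := by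
    have : 1 / s ≤ 1 := by rw [div_le_one hs0]; exact hs1
    linarith
  have h1 := mul_le_mul_of_nonneg_left hA hc1
  have h2 := mul_le_mul_of_nonneg_left hB (by positivity : (0:ℝ) ≤ 1 / s)
  have hδ : (1 - 1 / s) * δ' + (1 / s) * δ' = δ' := by ring
  have hN : (0:ℝ) ≤ μ / 2 * (s - 1 / s) * ‖p‖ ^ 2 := by
    have h3 : 1 / s ≤ 1 := by rw [div_le_one hs0]; exact hs1
    have : (0:ℝ) ≤ s - 1 / s := by linarith
    positivity
  have key : (1 - 1 / s) * (δ + ⟪g, p⟫ - μ / 2 * ‖p‖ ^ 2 - 1 / (2 * L) * ‖g‖ ^ 2)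
      + (1 / s) * (⟪g, q⟫ - μ / 2 * ‖q‖ ^ 2 - 1 / (2 * L) * ‖g‖ ^ 2)
      + μ / 2 * (‖q‖ ^ 2 + 2 * (s - 1) * ⟪q, p⟫ + (s - 1) ^ 2 * ‖p‖ ^ 2
          - 2 * (s / L) * ⟪g, q⟫ - 2 * (s - 1) * (s / L) * ⟪g, p⟫ + (s / L) ^ 2 * ‖g‖ ^ 2)
      = (1 - 1 / s) * (δ + μ / 2 * (‖q‖ ^ 2 + 2 * s * ⟪q, p⟫ + s ^ 2 * ‖p‖ ^ 2))
        - μ / 2 * (s - 1 / s) * ‖p‖ ^ 2 := by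
    rw [hLs]
    field_simp
    ring
  rw [hV, hU]
  linarith [h1, h2]


/-- Nesterov's accelerated gradient descent guarantee for a
differentiable, `μ`-strongly convex function `h : ℝ^d → ℝ` (`μ > 0`) with `L`-Lipschitz
gradient (`L ≥ μ`), condition number `κ = L/μ`, and global minimizer `x*`. For the
iterates `x 1 = y 1`, `x (t+1) = y t − (1/L) • ∇h(y t)`,
`y (t+1) = x (t+1) + ((√κ − 1)/(√κ + 1)) • (x (t+1) − x t)` (for `t ≥ 1`), every `t ≥ 1`
satisfies
`h (x t) − h x* ≤ ((μ/2)‖x 1 − x*‖² + h (x 1) − h x*) · exp (−(t−1)/√κ)`. -/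
theorem nesterov_accelerated_descent {d : ℕ}
    (h : EuclideanSpace ℝ (Fin d) → ℝ) (hdiff : Differentiable ℝ h)
    (μ L : ℝ) (hμ : 0 < μ) (hLμ : μ ≤ L)
    (hstrong : ConvexOn ℝ Set.univ (fun x => h x - (μ / 2) * ‖x‖ ^ 2))
    (hlip : ∀ x y : EuclideanSpace ℝ (Fin d),
      ‖gradient h x - gradient h y‖ ≤ L * ‖x - y‖)
    (κ : ℝ) (hκ : κ = L / μ)
    (xstar : EuclideanSpace ℝ (Fin d)) (hmin : ∀ y, h xstar ≤ h y)
    (x y : ℕ → EuclideanSpace ℝ (Fin d))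
    (hinit : x 1 = y 1)
    (hx : ∀ t ≥ 1, x (t + 1) = y t - (1 / L) • gradient h (y t))
    (hy : ∀ t ≥ 1, y (t + 1) =
      x (t + 1) + ((Real.sqrt κ - 1) / (Real.sqrt κ + 1)) • (x (t + 1) - x t)) :
    ∀ t : ℕ, 1 ≤ t →
      h (x t) - h xstar ≤
        ((μ / 2) * ‖x 1 - xstar‖ ^ 2 + h (x 1) - h xstar) *
          Real.exp (-((t : ℝ) - 1) / Real.sqrt κ) := by
  set s := Real.sqrt κ with hs
  have hL : 0 < L := lt_of_lt_of_le hμ hLμ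
  have hκ1 : 1 ≤ κ := by rw [hκ, le_div_iff₀ hμ]; linarith
  have hs1 : 1 ≤ s := by rw [hs]; exact Real.one_le_sqrt.2 hκ1
  have hs0 : 0 < s := lt_of_lt_of_le one_pos hs1
  have hss : s ^ 2 = κ := Real.sq_sqrt (le_trans zero_le_one hκ1)
  have hLs : L = μ * s ^ 2 := by
    rw [hss, hκ]; field_simp
  have hc1 : (0:ℝ) ≤ 1 - 1 / s := by
    have : 1 / s ≤ 1 := by rw [div_le_one hs0]; exact hs1
    linarith
  set C := (μ / 2) * ‖x 1 - xstar‖ ^ 2 + h (x 1) - h xstar with hC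
  have hC0 : 0 ≤ C := by
    have := hmin (x 1)
    have : 0 ≤ (μ / 2) * ‖x 1 - xstar‖ ^ 2 := by positivity
    have := hmin (x 1)
    rw [hC]; linarith
  -- one-step potential decrease
  have step : ∀ n, 1 ≤ n →
      (h (x (n+1)) - h xstar) + μ/2 * ‖x (n+1) + (s+1) • (y (n+1) - x (n+1)) - xstar‖^2 ≤
      (1 - 1/s) * ((h (x n) - h xstar) + μ/2 * ‖x n + (s+1) • (y n - x n) - xstar‖^2) := by
    intro n hn
    set g := gradient h (y n) with hg
    set p := y n - x n with hp
    set q := y n - xstar with hq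
    -- descent inequality
    have hdesc := aux_descent h hdiff L hlip (y n) (x (n+1))
    have e : x (n+1) - y n = -((1/L) • g) := by rw [hx n hn]; module
    rw [e] at hdesc
    have e2 : ⟪g, -((1/L) • g)⟫ = -(1/L) * ‖g‖^2 := by
      rw [inner_neg_right, real_inner_smul_right, real_inner_self_eq_norm_sq]; ring
    have e3 : ‖-((1/L) • g)‖^2 = (1/L)^2 * ‖g‖^2 := by
      rw [norm_neg, norm_smul, mul_pow, Real.norm_eq_abs, sq_abs]
    rw [e2, e3] at hdesc
    have harith : h (y n) + -(1/L) * ‖g‖^2 + L/2 * ((1/L)^2 * ‖g‖^2)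
        = h (y n) - 1/(2*L) * ‖g‖^2 := by field_simp; ring
    rw [harith] at hdesc
    -- strong convexity at (y n, x n) and (y n, xstar)
    have hstr1 := aux_strong h hdiff μ hstrong (y n) (x n)
    have e4 : x n - y n = -p := by rw [hp]; module
    rw [e4, inner_neg_right, norm_neg] at hstr1
    have hstr2 := aux_strong h hdiff μ hstrong (y n) xstar
    have e5 : xstar - y n = -q := by rw [hq]; module
    rw [e5, inner_neg_right, norm_neg] at hstr2
    have hA : h (x (n+1)) - h xstar ≤ (h (x n) - h xstar) + ⟪g, p⟫
        - μ/2 * ‖p‖^2 - 1/(2*L) * ‖g‖^2 := by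
      have : μ / 2 * ‖p‖ ^ 2 = (μ/2) * ‖p‖^2 := by ring
      linarith
    have hB : h (x (n+1)) - h xstar ≤ ⟪g, q⟫ - μ/2 * ‖q‖^2 - 1/(2*L) * ‖g‖^2 := by
      linarith
    have hkey := aux_step μ L s hμ hs1 hLs
      (h (x (n+1)) - h xstar) (h (x n) - h xstar) p q g hA hB
    have hup : x n + (s+1) • (y n - x n) - xstar = q + s • p := by
      rw [hq, hp]; module
    have hv' : x (n+1) + (s+1) • (y (n+1) - x (n+1)) - xstar
        = q + (s - 1) • p - (s/L) • g := by
      have e6 : y (n+1) - x (n+1) = ((s-1)/(s+1)) • (x (n+1) - x n) := by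
        rw [hy n hn]; rw [hs]; module
      rw [e6, smul_smul]
      have hcan : (s + 1) * ((s - 1) / (s + 1)) = s - 1 := by
        have : s + 1 ≠ 0 := by linarith
        field_simp
      rw [hcan, hx n hn, hq, hp]
      module
    rw [hup, hv']
    exact hkey
  -- iterate the potential
  have pot : ∀ n, 1 ≤ n →
      (h (x n) - h xstar) + μ/2 * ‖x n + (s+1) • (y n - x n) - xstar‖^2 ≤
        (1 - 1/s)^(n-1) * C := by
    intro n hn
    induction n, hn using Nat.le_induction with
    | base =>
      rw [← hinit, sub_self, smul_zero, add_zero]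
      simp [hC]
      linarith
    | succ n hn ih =>
      have h1 := step n hn
      have h2 := mul_le_mul_of_nonneg_left ih hc1
      have h3 : (1 - 1/s) * ((1 - 1/s)^(n-1) * C) = (1 - 1/s)^(n+1-1) * C := by
        have hn' : n - 1 + 1 = n := by omega
        have : (1 - 1/s)^(n+1-1) = (1 - 1/s)^(n-1) * (1 - 1/s) := by
          rw [Nat.add_sub_cancel, ← hn', pow_succ, hn']
        rw [this]; ring
      rw [h3] at h2
      exact le_trans h1 h2
  intro t ht
  have hΦ := pot t ht
  have hnorm : 0 ≤ μ/2 * ‖x t + (s+1) • (y t - x t) - xstar‖^2 := by positivity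
  have hexp1 : 1 - 1/s ≤ Real.exp (-(1/s)) := by
    have := Real.add_one_le_exp (-(1/s))
    linarith
  have hexp : (1 - 1/s)^(t-1) ≤ Real.exp (-((t:ℝ) - 1)/s) := by
    calc (1 - 1/s)^(t-1) ≤ (Real.exp (-(1/s)))^(t-1) := pow_le_pow_left₀ hc1 hexp1 _
    _ = Real.exp (((t-1 : ℕ) : ℝ) * (-(1/s))) := by rw [Real.exp_nat_mul]
    _ = Real.exp (-((t:ℝ) - 1)/s) := by
        congr 1
        have : ((t - 1 : ℕ) : ℝ) = (t : ℝ) - 1 := by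
          have := Nat.cast_sub ht (R := ℝ); push_cast at this ⊢; linarith
        rw [this]; ring
  have hmul := mul_le_mul_of_nonneg_right hexp hC0
  calc h (x t) - h xstar ≤ (1 - 1/s)^(t-1) * C := by linarith
  _ ≤ Real.exp (-((t:ℝ) - 1)/s) * C := hmul
  _ = C * Real.exp (-((t:ℝ) - 1)/s) := by ring
end

section
/- Let ε > 0, n ≥ 2, s = 2·(log n)/ε, and suppose each f_i is differentiable with ‖∇f_i(z)‖ ≤ G (G > 0) for all z on the segment joining x_1 and x*, where x* is a global minimizer of f. Let μ > 0, L̃ ≥ 0, L = s·G² + L̃, κ = L/μ, D = ‖x_1 − x*‖, and assume ε ≤ μ·D² + 2·G·D. Define iterates x_1 = y_1, x_{t+1} = y_t − (1/L)·∇g_s(y_t), y_{t+1} = x_{t+1} + ((√κ − 1)/(√κ + 1))·(x_{t+1} − x_t), and assume the accelerated-descent guarantee holds: for all t ≥ 1, g_s(x_t) − g_s(x*) ≤ ( (μ/2)·D² + g_s(x_1) − g_s(x*) )·exp(−(t−1)/√κ). Then for every t ≥ 1 + √( (2·G²·log n)/(ε·μ) + L̃/μ )·log( (μ·D² + 2·G·D)/ε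 ), the optimality gap satisfies f(x_t) − f(x*) ≤ ε. -/
/-- Iteration-count guarantee for the smoothed min-max optimizer.
With `F x = max_i f i x`, `g_s x = (1/s) log (∑ i, exp (s * f i x))`, `s = 2 log n / ε`,
gradient bound `G` on the segment joining `x 1` and a global minimizer `x*`, `μ > 0`,
`L = s G² + L̃`, `κ = L/μ`, `D = ‖x 1 − x*‖`, `ε ≤ μ D² + 2 G D`, Nesterov iterates, and
the accelerated-descent guarantee; then for every
`t ≥ 1 + √((2 G² log n)/(ε μ) + L̃/μ) · log ((μ D² + 2 G D)/ε)` we have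
`F (x t) − F x* ≤ ε`. -/
theorem smoothed_minmax_iteration_bound {d n : ℕ} (hn : 2 ≤ n)
    (ε : ℝ) (hε : 0 < ε) (s : ℝ) (hs : s = 2 * Real.log n / ε)
    (f : Fin n → EuclideanSpace ℝ (Fin d) → ℝ)
    (hdiff : ∀ i, Differentiable ℝ (f i))
    (xstar : EuclideanSpace ℝ (Fin d))
    (hmin : ∀ z : EuclideanSpace ℝ (Fin d),
      (Finset.univ.sup' (Finset.univ_nonempty_iff.mpr ⟨⟨0, by omega⟩⟩) fun i => f i xstar) ≤
        Finset.univ.sup' (Finset.univ_nonempty_iff.mpr ⟨⟨0, by omega⟩⟩) fun i => f i z)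
    (x y : ℕ → EuclideanSpace ℝ (Fin d))
    (G : ℝ) (hG : 0 < G)
    (hgrad : ∀ i, ∀ z ∈ segment ℝ (x 1) xstar, ‖gradient (f i) z‖ ≤ G)
    (μ Ltil L κ D : ℝ) (hμ : 0 < μ) (hLtil : 0 ≤ Ltil)
    (hL : L = s * G ^ 2 + Ltil) (hκ : κ = L / μ) (hD : D = ‖x 1 - xstar‖)
    (hεD : ε ≤ μ * D ^ 2 + 2 * G * D)
    (hinit : x 1 = y 1)
    (hx : ∀ t ≥ 1, x (t + 1) = y t -
      (1 / L) • gradient (fun z => (1 / s) * Real.log (∑ i, Real.exp (s * f i z))) (y t))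
    (hy : ∀ t ≥ 1, y (t + 1) =
      x (t + 1) + ((Real.sqrt κ - 1) / (Real.sqrt κ + 1)) • (x (t + 1) - x t))
    (hguar : ∀ t : ℕ, 1 ≤ t →
      (1 / s) * Real.log (∑ i, Real.exp (s * f i (x t))) -
          (1 / s) * Real.log (∑ i, Real.exp (s * f i xstar)) ≤
        ((μ / 2) * D ^ 2 +
            (1 / s) * Real.log (∑ i, Real.exp (s * f i (x 1))) -
            (1 / s) * Real.log (∑ i, Real.exp (s * f i xstar))) *
          Real.exp (-((t : ℝ) - 1) / Real.sqrt κ)) :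
    ∀ t : ℕ,
      1 + Real.sqrt ((2 * G ^ 2 * Real.log n) / (ε * μ) + Ltil / μ) *
          Real.log ((μ * D ^ 2 + 2 * G * D) / ε) ≤ (t : ℝ) →
        (Finset.univ.sup' (Finset.univ_nonempty_iff.mpr ⟨⟨0, by omega⟩⟩) fun i => f i (x t)) -
            (Finset.univ.sup' (Finset.univ_nonempty_iff.mpr ⟨⟨0, by omega⟩⟩)
              fun i => f i xstar) ≤ ε := by
  have hne : (Finset.univ : Finset (Fin n)).Nonempty := ⟨⟨0, by omega⟩, Finset.mem_univ _⟩
  set F : EuclideanSpace ℝ (Fin d) → ℝ := fun z => Finset.univ.sup' hne fun i => f i z with hFdef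
  set g : EuclideanSpace ℝ (Fin d) → ℝ :=
    fun z => (1 / s) * Real.log (∑ i, Real.exp (s * f i z)) with hgdef
  have hn2 : (2 : ℝ) ≤ (n : ℝ) := by exact_mod_cast hn
  have hlogn : 0 < Real.log n := Real.log_pos (by linarith)
  have hs0 : 0 < s := by rw [hs]; positivity
  have sumpos : ∀ z, 0 < ∑ i, Real.exp (s * f i z) := fun z =>
    Finset.sum_pos (fun i _ => Real.exp_pos _) hne
  have hDnn : 0 ≤ D := hD ▸ norm_nonneg _
  -- F ≤ g
  have hFg : ∀ z, F z ≤ g z := by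
    intro z
    obtain ⟨j, -, hj⟩ := Finset.exists_mem_eq_sup' hne (fun i => f i z)
    have h1 : Real.exp (s * f j z) ≤ ∑ i, Real.exp (s * f i z) :=
      Finset.single_le_sum (f := fun i => Real.exp (s * f i z))
        (fun i _ => (Real.exp_pos _).le) (Finset.mem_univ j)
    have h2 : s * f j z ≤ Real.log (∑ i, Real.exp (s * f i z)) :=
      (Real.le_log_iff_exp_le (sumpos z)).2 h1
    have : f j z ≤ (1 / s) * Real.log (∑ i, Real.exp (s * f i z)) := by
      rw [one_div, inv_mul_eq_div, le_div_iff₀ hs0]; linarith [h2]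
    simpa [hFdef, hgdef, hj] using this
  -- g ≤ F + log n / s
  have hgF : ∀ z, g z ≤ F z + Real.log n / s := by
    intro z
    have h1 : ∑ i, Real.exp (s * f i z) ≤ (n : ℝ) * Real.exp (s * F z) := by
      calc ∑ i, Real.exp (s * f i z) ≤ ∑ _i : Fin n, Real.exp (s * F z) := by
            refine Finset.sum_le_sum fun i _ => Real.exp_le_exp.2 ?_
            exact mul_le_mul_of_nonneg_left
              (Finset.le_sup' (fun i => f i z) (Finset.mem_univ i)) hs0.le
        _ = (n : ℝ) * Real.exp (s * F z) := by
            simp [Finset.sum_const, Finset.card_univ, nsmul_eq_mul]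
    have h2 : Real.log (∑ i, Real.exp (s * f i z)) ≤ Real.log n + s * F z := by
      calc Real.log (∑ i, Real.exp (s * f i z))
          ≤ Real.log ((n : ℝ) * Real.exp (s * F z)) := Real.log_le_log (sumpos z) h1
        _ = Real.log n + s * F z := by
            rw [Real.log_mul (by positivity) (Real.exp_ne_zero _), Real.log_exp]
    have := mul_le_mul_of_nonneg_left h2 (le_of_lt (one_div_pos.2 hs0))
    calc g z = (1 / s) * Real.log (∑ i, Real.exp (s * f i z)) := rfl
      _ ≤ (1 / s) * (Real.log n + s * F z) := this
      _ = F z + Real.log n / s := by field_simp; ring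
  -- g (x 1) - g xstar ≤ G * D
  have hgap1 : g (x 1) - g xstar ≤ G * D := by
    have key : ∀ i, f i (x 1) - f i xstar ≤ G * D := by
      intro i
      have := Convex.norm_image_sub_le_of_norm_fderiv_le
        (f := f i) (s := segment ℝ (x 1) xstar) (C := G)
        (fun z _ => (hdiff i).differentiableAt)
        (fun z hz => by
          have h := hgrad i z hz
          rwa [gradient, LinearIsometryEquiv.norm_map] at h)
        (convex_segment _ _) (right_mem_segment _ _ _) (left_mem_segment _ _ _)
      rw [← hD] at this
      calc f i (x 1) - f i xstar ≤ |f i (x 1) - f i xstar| := le_abs_self _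
        _ = ‖f i (x 1) - f i xstar‖ := rfl
        _ ≤ G * D := this
    have h1 : ∑ i, Real.exp (s * f i (x 1)) ≤
        Real.exp (s * (G * D)) * ∑ i, Real.exp (s * f i xstar) := by
      rw [Finset.mul_sum]
      refine Finset.sum_le_sum fun i _ => ?_
      rw [← Real.exp_add]
      exact Real.exp_le_exp.2 (by nlinarith [key i, hs0.le])
    have h2 : Real.log (∑ i, Real.exp (s * f i (x 1))) ≤
        s * (G * D) + Real.log (∑ i, Real.exp (s * f i xstar)) := by
      calc Real.log (∑ i, Real.exp (s * f i (x 1)))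
          ≤ Real.log (Real.exp (s * (G * D)) * ∑ i, Real.exp (s * f i xstar)) :=
            Real.log_le_log (sumpos _) h1
        _ = s * (G * D) + Real.log (∑ i, Real.exp (s * f i xstar)) := by
            rw [Real.log_mul (Real.exp_ne_zero _) (ne_of_gt (sumpos _)), Real.log_exp]
    have h3 := mul_le_mul_of_nonneg_left h2 (le_of_lt (one_div_pos.2 hs0))
    have hGD : (1 / s) * (s * (G * D)) = G * D := by field_simp
    simp only [hgdef]
    rw [mul_add] at h3
    linarith [h3, hGD]
  -- half-smoothing: log n / s = ε / 2
  have hhalf : Real.log n / s = ε / 2 := by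
    rw [hs]; field_simp
  intro t ht
  -- κ matches the sqrt expression
  have hκeq : (2 * G ^ 2 * Real.log n) / (ε * μ) + Ltil / μ = κ := by
    rw [hκ, hL, hs]; field_simp
  have hκpos : 0 < κ := by
    rw [hκ, hL]
    have : 0 < s * G ^ 2 := by positivity
    positivity
  have hsqκ : 0 < Real.sqrt κ := Real.sqrt_pos.2 hκpos
  set R := (μ * D ^ 2 + 2 * G * D) / ε with hRdef
  have hR1 : 1 ≤ R := (one_le_div hε).2 hεD
  have hRpos : 0 < R := lt_of_lt_of_le one_pos hR1
  have hlogR : 0 ≤ Real.log R := Real.log_nonneg hR1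
  rw [hκeq] at ht
  have ht1 : 1 ≤ t := by
    have : (1 : ℝ) ≤ (t : ℝ) := le_trans (by nlinarith [Real.sqrt_nonneg κ]) ht
    exact_mod_cast this
  -- exponential bound
  have hexp : Real.exp (-((t : ℝ) - 1) / Real.sqrt κ) ≤ 1 / R := by
    have h1 : Real.sqrt κ * Real.log R ≤ (t : ℝ) - 1 := by linarith
    have h2 : -((t : ℝ) - 1) / Real.sqrt κ ≤ -Real.log R := by
      rw [neg_div, neg_le_neg_iff, le_div_iff₀ hsqκ, mul_comm]
      exact h1
    calc Real.exp (-((t : ℝ) - 1) / Real.sqrt κ) ≤ Real.exp (-Real.log R) :=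
          Real.exp_le_exp.2 h2
      _ = 1 / R := by rw [Real.exp_neg, Real.exp_log hRpos, one_div]
  have hguar' := hguar t ht1
  have hC : (μ / 2) * D ^ 2 + g (x 1) - g xstar ≤ R * ε / 2 := by
    have : R * ε = μ * D ^ 2 + 2 * G * D := by
      rw [hRdef]; field_simp
    rw [this]; linarith
  have hgap : g (x t) - g xstar ≤ ε / 2 := by
    have hE0 : 0 ≤ Real.exp (-((t : ℝ) - 1) / Real.sqrt κ) := (Real.exp_pos _).le
    calc g (x t) - g xstar
        ≤ ((μ / 2) * D ^ 2 + g (x 1) - g xstar) *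
            Real.exp (-((t : ℝ) - 1) / Real.sqrt κ) := hguar'
      _ ≤ (R * ε / 2) * Real.exp (-((t : ℝ) - 1) / Real.sqrt κ) :=
          mul_le_mul_of_nonneg_right hC hE0
      _ ≤ (R * ε / 2) * (1 / R) := by
          refine mul_le_mul_of_nonneg_left hexp (by positivity)
      _ = ε / 2 := by field_simp
  show F (x t) - F xstar ≤ ε
  have h1 := hFg (x t)
  have h2 := hgF xstar
  linarith [hhalf ▸ h2]
end

section
/- Any global minimizer x* of f(x) = max_{1≤i≤n} ‖x − a_i‖² over ℝ^d belongs to the convex hull of the points {a_1, …, a_n}. -/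
open scoped RealInnerProductSpace


/-- Any global minimizer `x*` of `f x = max_i ‖x − a i‖²` over `ℝ^d`
belongs to the convex hull of the points `{a 1, …, a n}`. -/
theorem bounding_sphere_center_mem_convexHull {d n : ℕ} (hn : 0 < n)
    (a : Fin n → EuclideanSpace ℝ (Fin d))
    (xstar : EuclideanSpace ℝ (Fin d))
    (hmin : ∀ z : EuclideanSpace ℝ (Fin d),
      (Finset.univ.sup' (Finset.univ_nonempty_iff.mpr ⟨⟨0, hn⟩⟩)
          fun i => ‖xstar - a i‖ ^ 2) ≤
        Finset.univ.sup' (Finset.univ_nonempty_iff.mpr ⟨⟨0, hn⟩⟩)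
          fun i => ‖z - a i‖ ^ 2) :
    xstar ∈ convexHull ℝ (Set.range a) := by
  by_contra hx
  set K := convexHull ℝ (Set.range a) with hK
  have hKconv : Convex ℝ K := convex_convexHull ℝ _
  have hKcomp : IsCompact K := (Set.finite_range a).isCompact_convexHull (𝕜 := ℝ)
  have hKne : K.Nonempty :=
    convexHull_nonempty_iff.mpr (Set.range_nonempty_iff_nonempty.mpr ⟨⟨0, hn⟩⟩)
  obtain ⟨v, hvK, hv⟩ :=
    exists_norm_eq_iInf_of_complete_convex hKne hKcomp.isComplete hKconv xstar
  have hproj : ∀ w ∈ K, ⟪xstar - v, w - v⟫ ≤ 0 :=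
    (norm_eq_iInf_iff_real_inner_le_zero hKconv hvK).mp hv
  have hne : xstar - v ≠ 0 := sub_ne_zero.mpr (fun h => hx (h ▸ hvK))
  have hpos : 0 < ‖xstar - v‖ ^ 2 := by
    have := norm_pos_iff.mpr hne
    positivity
  have key : ∀ i, ‖v - a i‖ ^ 2 < ‖xstar - a i‖ ^ 2 := by
    intro i
    have hai : a i ∈ K := subset_convexHull ℝ _ (Set.mem_range_self i)
    have h1 := hproj (a i) hai
    have e1 : a i - v = (xstar - v) - (xstar - a i) := by abel
    rw [e1, inner_sub_right, real_inner_self_eq_norm_sq] at h1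
    have h2 : v - a i = (xstar - a i) - (xstar - v) := by abel
    have h3 : ‖v - a i‖ ^ 2
        = ‖xstar - a i‖ ^ 2 - 2 * ⟪xstar - a i, xstar - v⟫ + ‖xstar - v‖ ^ 2 := by
      rw [h2, norm_sub_sq_real]
    have hcomm : ⟪xstar - a i, xstar - v⟫ = ⟪xstar - v, xstar - a i⟫ :=
      real_inner_comm _ _
    nlinarith [h1, h3, hpos]
  have hNe : (Finset.univ : Finset (Fin n)).Nonempty :=
    Finset.univ_nonempty_iff.mpr ⟨⟨0, hn⟩⟩
  obtain ⟨i0, -, hi0⟩ := Finset.exists_mem_eq_sup' hNe (fun i => ‖xstar - a i‖ ^ 2)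
  have hv2 : Finset.univ.sup' hNe (fun i => ‖v - a i‖ ^ 2)
      < Finset.univ.sup' hNe (fun i => ‖xstar - a i‖ ^ 2) := by
    rw [Finset.sup'_lt_iff]
    intro i _
    exact lt_of_lt_of_le (key i)
      (Finset.le_sup' (fun i => ‖xstar - a i‖ ^ 2) (Finset.mem_univ i))
  exact absurd (hmin v) (not_le.mpr hv2)
end

section
/- Let x* be a global minimizer of f over ℝ^d and let R = √(f(x*)) be the minimal bounding sphere radius. If x_1 belongs to the convex hull of {a_1, …, a_n}, then √(f(x_1))/2 ≤ R ≤ √(f(x_1)); equivalently, f(x*) ≤ f(x_1) ≤ 4·f(x*). -/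
/-! Every point `a i` lies in the closed ball of radius `R` about `x*`; the ball is convex, so it
contains `x₁`, and the triangle inequality through `x*` puts every `a i` within `2R` of `x₁`.
The other bound is the minimality of `x*` itself. -/

open Finset

lemma Real.sqrt_sup'_sq_norm {ι E : Type*} [SeminormedAddGroup E] {s : Finset ι}
    (hs : s.Nonempty) (v : ι → E) :
    √(s.sup' hs fun i => ‖v i‖ ^ 2) = s.sup' hs fun i => ‖v i‖ := by
  rw [apply_sup'_eq_sup'_comp hs Real.sqrt fun _ _ => Real.sqrt_monotone.map_max]
  simp only [Function.comp_def, Real.sqrt_sq (norm_nonneg _)]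

lemma sup'_norm_sub_le_two_mul_of_mem_convexHull {ι E : Type*} [Fintype ι]
    [SeminormedAddCommGroup E] [NormedSpace ℝ E] (hι : (univ : Finset ι).Nonempty)
    {a : ι → E} (c : E) {x : E} (hx : x ∈ convexHull ℝ (Set.range a)) :
    (univ.sup' hι fun i => ‖x - a i‖) ≤ 2 * univ.sup' hι fun i => ‖c - a i‖ := by
  set r := univ.sup' hι fun i => ‖c - a i‖
  have hball : ∀ i, dist c (a i) ≤ r := fun i =>
    (dist_eq_norm _ _).trans_le (le_sup' (fun i => ‖c - a i‖) (mem_univ i))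
  have hxc : dist x c ≤ r := by
    have hsub : Set.range a ⊆ Metric.closedBall c r := by
      rintro _ ⟨i, rfl⟩
      exact (dist_comm _ _).trans_le (hball i)
    exact convexHull_min hsub (convex_closedBall c r) hx
  refine sup'_le hι _ fun i _ => ?_
  calc ‖x - a i‖ = dist x (a i) := (dist_eq_norm _ _).symm
    _ ≤ dist x c + dist c (a i) := dist_triangle _ _ _
    _ ≤ 2 * r := by linarith [hball i]

/-- For `f x = max_i ‖x − a i‖²`, a global minimizer `x*`, and
`R = √(f x*)` the minimal bounding sphere radius: if `x 1` belongs to the convex hull of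
the points, then `√(f x1)/2 ≤ R ≤ √(f x1)`. -/
theorem bounding_sphere_radius_bounds {d n : ℕ} (hn : 0 < n)
    (a : Fin n → EuclideanSpace ℝ (Fin d))
    (xstar : EuclideanSpace ℝ (Fin d))
    (hmin : ∀ z : EuclideanSpace ℝ (Fin d),
      (Finset.univ.sup' (Finset.univ_nonempty_iff.mpr ⟨⟨0, hn⟩⟩)
          fun i => ‖xstar - a i‖ ^ 2) ≤
        Finset.univ.sup' (Finset.univ_nonempty_iff.mpr ⟨⟨0, hn⟩⟩)
          fun i => ‖z - a i‖ ^ 2)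
    (R : ℝ)
    (hR : R = Real.sqrt (Finset.univ.sup' (Finset.univ_nonempty_iff.mpr ⟨⟨0, hn⟩⟩)
      fun i => ‖xstar - a i‖ ^ 2))
    (x₁ : EuclideanSpace ℝ (Fin d)) (hx₁ : x₁ ∈ convexHull ℝ (Set.range a)) :
    Real.sqrt (Finset.univ.sup' (Finset.univ_nonempty_iff.mpr ⟨⟨0, hn⟩⟩)
        fun i => ‖x₁ - a i‖ ^ 2) / 2 ≤ R ∧
      R ≤ Real.sqrt (Finset.univ.sup' (Finset.univ_nonempty_iff.mpr ⟨⟨0, hn⟩⟩)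
        fun i => ‖x₁ - a i‖ ^ 2) := by
  refine ⟨?_, hR ▸ Real.sqrt_le_sqrt (hmin x₁)⟩
  rw [hR, Real.sqrt_sup'_sq_norm, Real.sqrt_sup'_sq_norm]
  linarith [sup'_norm_sub_le_two_mul_of_mem_convexHull
    (univ_nonempty_iff.mpr ⟨⟨0, hn⟩⟩) xstar hx₁]
end
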